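/- Let S and T be trees of height ω₁ with S ≤ T, and suppose S is a nonspecial ω₁-tree. Then T is nonspecial and ◊_S implies ◊_T. -/

import Mathlib

open Set

/-- The first uncountable ordinal `ω₁`. -/
noncomputable def omega1 : Ordinal := Ordinal.omega 1

section TreeDefs

variable {T : Type*} [PartialOrder T]

/-- In a tree, the set of strict predecessors of any node is linearly ordered. -/
def PredsChain (T : Type*) [PartialOrder T] : Prop :=
  ∀ t : T, IsChain (· ≤ ·) {s : T | s < t}

/-- `ht` is *the* height function of the tree: it is strictly monotone on comparable pairs and
the heights of the strict predecessors of `t` are exactly the ordinals below `ht t`; together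
with `PredsChain` this says that the set `t↓` of strict predecessors of `t` is well-ordered
with order type `ht t`. -/
def IsHeightFun (ht : T → Ordinal) : Prop :=
  (∀ s t : T, s < t → ht s < ht t) ∧
  ∀ t : T, ∀ o : Ordinal, o < ht t → ∃ s : T, s < t ∧ ht s = o

/-- The tree has height `ω₁`: every node has height `< ω₁` and every countable ordinal is the
height of some node. -/
def HeightOmega1 (ht : T → Ordinal) : Prop :=
  (∀ t : T, ht t < omega1) ∧ ∀ o : Ordinal, o < omega1 → ∃ t : T, ht t = o

/-- All levels of the tree are countable. -/
def CountableLevels (ht : T → Ordinal) : Prop :=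
  ∀ o : Ordinal, {t : T | ht t = o}.Countable

/-- A tree of height `ω₁` is well-pruned if every node has successors in all later levels. -/
def WellPruned (ht : T → Ordinal) : Prop :=
  ∀ o o' : Ordinal, o < o' → o' < omega1 →
    ∀ s : T, ht s = o → ∃ t : T, s < t ∧ ht t = o'

/-- A special subset of a tree: a union of countably many antichains. -/
def IsSpecialSet (U : Set T) : Prop :=
  ∃ A : ℕ → Set T, (∀ n : ℕ, IsAntichain (· ≤ ·) (A n)) ∧ U ⊆ ⋃ n, A n

/-- Membership in the ideal `NS^T`: there is a regressive map on `B` all of whose fibers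
are special. -/
def InNS [OrderBot T] (B : Set T) : Prop :=
  ∃ f : T → T, (∀ t ∈ B, t ≠ ⊥ → f t < t) ∧
    ∀ t : T, IsSpecialSet {s : T | s ∈ B ∧ f s = t}

/-- The diamond principle `◊_T` for a tree `T`. -/
def DiamondTree (T : Type*) [PartialOrder T] [OrderBot T] : Prop :=
  ∃ D : T → Set T, (∀ t : T, D t ⊆ Set.Iio t) ∧
    ∀ X : Set T, ¬ InNS {t : T | X ∩ Set.Iio t = D t}

end TreeDefs

/-- Club subsets of `ω₁`: closed and unbounded in `ω₁`. -/
def IsClubIn (C : Set Ordinal) : Prop :=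
  C ⊆ Set.Iio omega1 ∧
  (∀ o : Ordinal, o < omega1 → ∃ b ∈ C, o < b) ∧
  ∀ o : Ordinal, o < omega1 → (C ∩ Set.Iio o).Nonempty →
    IsLUB (C ∩ Set.Iio o) o → o ∈ C

/-- Stationary subsets of `ω₁`: sets meeting every club. -/
def IsStationaryIn (S : Set Ordinal) : Prop :=
  ∀ C : Set Ordinal, IsClubIn C → (S ∩ C).Nonempty

/-- The diamond principle `◊(S)` for `S ⊆ ω₁`;  `◊` is `DiamondOn (Set.Iio omega1)`. -/
def DiamondOn (S : Set Ordinal) : Prop :=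
  ∃ D : Ordinal → Set Ordinal, (∀ o ∈ S, D o ⊆ Set.Iio o) ∧
    ∀ X : Set Ordinal, X ⊆ Set.Iio omega1 →
      IsStationaryIn {o ∈ S | X ∩ Set.Iio o = D o}

/-!
Preimages of antichains under a strictly increasing map are antichains, so `T` is nonspecial.

For `◊`, first replace the map `g : S → T` by a level-preserving one (send `s` to the
predecessor of `g s` at the height of `s`). Pulling back along such a map sends `NS^T` into
`NS^S`. Read through the height function, a `◊_S`-sequence guesses subsets of `ω₁` at the nodes
of `S`; as the levels of `S` are countable, Kunen's argument with the coding `(ξ, n) ↦ ω·ξ + n`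
and the club of its closure points yields a single guess per level. The `◊_T`-sequence then
guesses at `t` the image nodes below `t` whose codes lie in the guess for the level of `t`.
-/

open Ordinal Cardinal

universe u v

theorem countable_Iio_of_lt_omega1 {o : Ordinal} (h : o < omega1) : (Iio o).Countable := by
  rw [← le_aleph0_iff_set_countable, Cardinal.mk_Iio_ordinal, lift_le_aleph0,
    ← Order.lt_succ_iff, succ_aleph0, ← lt_ord, ord_aleph]
  exact h

noncomputable def ordPair (ξ : Ordinal) (n : ℕ) : Ordinal := ω * ξ + n

theorem ordPair_inj {ξ ξ' : Ordinal} {n n' : ℕ} :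
    ordPair ξ n = ordPair ξ' n' ↔ ξ = ξ' ∧ n = n' := by
  refine ⟨fun h => ?_, fun ⟨rfl, rfl⟩ => rfl⟩
  have hdiv (ζ : Ordinal) (m : ℕ) : ordPair ζ m / ω = ζ := by
    rw [ordPair, mul_add_div _ omega0_ne_zero, div_eq_zero_of_lt (natCast_lt_omega0 m),
      add_zero]
  have hmod (ζ : Ordinal) (m : ℕ) : ordPair ζ m % ω = m := by
    rw [ordPair, mul_add_mod_self, mod_eq_of_lt (natCast_lt_omega0 m)]
  refine ⟨by rw [← hdiv ξ n, ← hdiv ξ' n', h], ?_⟩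
  exact_mod_cast (hmod ξ n).symm.trans (h ▸ hmod ξ' n')

theorem self_le_ordPair (ξ : Ordinal) (n : ℕ) : ξ ≤ ordPair ξ n :=
  (le_mul_right ξ omega0_pos).trans le_self_add

theorem ordPair_lt_of_omega0_mul_eq {ξ δ : Ordinal} (hδ : ω * δ = δ) (hξ : ξ < δ) (n : ℕ) :
    ordPair ξ n < δ :=
  calc ordPair ξ n < ω * ξ + ω := add_lt_add_right (natCast_lt_omega0 n) _
    _ = ω * Order.succ ξ := (mul_succ ω ξ).symm
    _ ≤ ω * δ := mul_le_mul_right (Order.succ_le_of_lt hξ) _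
    _ = δ := hδ

def pairClosed : Set Ordinal := {δ | δ < omega1 ∧ ∀ ξ < δ, ∀ n : ℕ, ordPair ξ n < δ}

theorem ordPair_lt_iff_of_mem_pairClosed {δ : Ordinal} (hδ : δ ∈ pairClosed) {ξ : Ordinal}
    {n : ℕ} : ordPair ξ n < δ ↔ ξ < δ :=
  ⟨(self_le_ordPair ξ n).trans_lt, fun h => hδ.2 ξ h n⟩

theorem isClubIn_pairClosed : IsClubIn pairClosed := by
  refine ⟨fun δ hδ => hδ.1, fun o ho => ?_, fun o ho _ hlub => ⟨ho, fun ξ hξ n => ?_⟩⟩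
  · -- The next fixed point of `ξ ↦ ω * ξ` above `o` is closed under `ordPair`, and stays below
    -- `ω₁` because `cof ω₁ > ℵ₀`.
    have hmul : ∀ i < omega1, ω * i < omega1 := fun i hi =>
      isPrincipal_mul_omega 1 omega0_lt_omega_one hi
    have hsucc : o + 1 < omega1 :=
      isPrincipal_add_omega 1 ho (one_lt_omega0.trans omega0_lt_omega_one)
    have hfix : ω * nfp (ω * ·) (o + 1) = nfp (ω * ·) (o + 1) :=
      nfp_fp (isNormal_mul_right omega0_pos) _
    refine ⟨nfp (ω * ·) (o + 1), ⟨nfp_lt_ord (by simp [omega1]) hmul hsucc,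
      fun ξ hξ n => ordPair_lt_of_omega0_mul_eq hfix hξ n⟩,
      (Order.lt_succ o).trans_le (le_nfp _ _)⟩
  · obtain ⟨c, ⟨hcC, hco⟩, hξc⟩ := (lt_isLUB_iff hlub).1 hξ
    exact (hcC.2 ξ hξc n).trans hco

section Special

variable {α : Type*} [PartialOrder α]

theorem IsAntichain.isSpecialSet {A : Set α} (hA : IsAntichain (· ≤ ·) A) : IsSpecialSet A :=
  ⟨fun _ => A, fun _ => hA, subset_iUnion (fun _ : ℕ => A) 0⟩

theorem isSpecialSet_iff_countable_sUnion {U : Set α} :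
    IsSpecialSet U ↔ ∃ 𝒜 : Set (Set α), 𝒜.Countable ∧
      (∀ A ∈ 𝒜, IsAntichain (· ≤ ·) A) ∧ U ⊆ ⋃₀ 𝒜 := by
  constructor
  · rintro ⟨A, hA, hU⟩
    exact ⟨range A, countable_range A, forall_mem_range.2 hA, by rwa [sUnion_range]⟩
  · rintro ⟨𝒜, h𝒜, hA, hU⟩
    obtain ⟨A, hrange⟩ := (h𝒜.insert ∅).exists_eq_range (insert_nonempty _ _)
    refine ⟨A, fun n => ?_, hU.trans fun x hx => ?_⟩
    · rcases (hrange ▸ mem_range_self n : A n ∈ insert ∅ 𝒜) with h | h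
      · exact h ▸ IsAntichain.empty
      · exact hA _ h
    · rw [← sUnion_range, ← hrange, sUnion_insert, empty_union]
      exact hx

theorem IsSpecialSet.mono {U V : Set α} (hUV : U ⊆ V) (hV : IsSpecialSet V) : IsSpecialSet U :=
  let ⟨A, hA, hV⟩ := hV
  ⟨A, hA, hUV.trans hV⟩

theorem IsSpecialSet.iUnion {ι : Type*} [Countable ι] {U : ι → Set α}
    (h : ∀ i, IsSpecialSet (U i)) : IsSpecialSet (⋃ i, U i) := by
  simp_rw [isSpecialSet_iff_countable_sUnion] at h ⊢
  choose 𝒜 h𝒜 hA hU using h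
  refine ⟨⋃ i, 𝒜 i, countable_iUnion h𝒜, fun A hA' => ?_, iUnion_subset fun i => ?_⟩
  · obtain ⟨i, hi⟩ := mem_iUnion.1 hA'
    exact hA i A hi
  · exact (hU i).trans (sUnion_mono (subset_iUnion 𝒜 i))

theorem Set.Countable.isSpecialSet_biUnion {β : Type*} {P : Set β} (hP : P.Countable)
    {U : β → Set α} (h : ∀ i ∈ P, IsSpecialSet (U i)) : IsSpecialSet (⋃ i ∈ P, U i) := by
  have := hP.to_subtype
  rw [biUnion_eq_iUnion]
  exact IsSpecialSet.iUnion fun i => h i i.2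

theorem IsSpecialSet.insert {U : Set α} (hU : IsSpecialSet U) (a : α) :
    IsSpecialSet (insert a U) := by
  rw [insert_eq, union_eq_iUnion]
  refine IsSpecialSet.iUnion fun b => ?_
  cases b
  · exact hU
  · exact IsAntichain.singleton.isSpecialSet

theorem IsSpecialSet.preimage {β : Type*} [PartialOrder β] {g : α → β} (hg : StrictMono g)
    {B : Set β} (hB : IsSpecialSet B) : IsSpecialSet (g ⁻¹' B) := by
  obtain ⟨A, hA, hB⟩ := hB
  refine ⟨fun n => g ⁻¹' A n, fun n a ha b hb hne hab => ?_, by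
    simpa only [preimage_iUnion] using preimage_mono hB⟩
  have hlt := hg (lt_of_le_of_ne hab hne)
  exact hA n ha hb hlt.ne hlt.le

end Special

section Height

variable {α : Type*} [PartialOrder α] {ht : α → Ordinal}

theorem IsHeightFun.isAntichain_level (hht : IsHeightFun ht) (o : Ordinal) :
    IsAntichain (· ≤ ·) {s | ht s = o} := fun a ha b hb hne hab =>
  (hht.1 a b (lt_of_le_of_ne hab hne)).ne (ha.trans hb.symm)

theorem IsHeightFun.isSpecialSet_ht_lt (hht : IsHeightFun ht) {γ : Ordinal} (hγ : γ < omega1) :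
    IsSpecialSet {s | ht s < γ} := by
  have hsub : {s | ht s < γ} ⊆ ⋃ o ∈ Iio γ, {s | ht s = o} := fun s hs =>
    mem_biUnion (x := ht s) hs rfl
  exact ((countable_Iio_of_lt_omega1 hγ).isSpecialSet_biUnion fun o _ =>
    (hht.isAntichain_level o).isSpecialSet).mono hsub

theorem IsHeightFun.ht_eq_zero_iff [OrderBot α] (hht : IsHeightFun ht) {t : α} :
    ht t = 0 ↔ t = ⊥ := by
  refine ⟨fun h => by_contra fun hne => ?_, fun h => by_contra fun hne => ?_⟩
  · exact (h ▸ hht.1 ⊥ t (bot_lt_iff_ne_bot.2 hne)).not_ge zero_le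
  · obtain ⟨s, hs, -⟩ := hht.2 t 0 (pos_iff_ne_zero.2 hne)
    exact not_lt_bot (h ▸ hs)

theorem IsHeightFun.image_Iio (hht : IsHeightFun ht) (t : α) : ht '' Iio t = Iio (ht t) := by
  ext o
  refine ⟨?_, fun ho => ?_⟩
  · rintro ⟨s, hs, rfl⟩
    exact hht.1 s t hs
  · obtain ⟨s, hs, rfl⟩ := hht.2 t o ho
    exact mem_image_of_mem ht hs

theorem PredsChain.lt_of_ht_lt (hchain : PredsChain α) (hht : IsHeightFun ht) {a b t : α}
    (ha : a < t) (hb : b ≤ t) (hab : ht a < ht b) : a < b := by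
  rcases hb.lt_or_eq with hb | rfl
  · rcases hchain t ha hb (fun h => (h ▸ hab).false) with h | h
    · exact lt_of_le_of_ne h (fun h' => (h' ▸ hab).false)
    · exact absurd (hht.1 _ _ (lt_of_le_of_ne h fun h' => (h' ▸ hab).false)) hab.not_gt
  · exact ha

theorem PredsChain.eq_of_ht_eq (hchain : PredsChain α) (hht : IsHeightFun ht) {a b t : α}
    (ha : a < t) (hb : b < t) (hab : ht a = ht b) : a = b := by
  by_contra hne
  rcases hchain t ha hb hne with h | h
  · exact (hht.1 _ _ (lt_of_le_of_ne h hne)).ne hab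
  · exact (hht.1 _ _ (lt_of_le_of_ne h (Ne.symm hne))).ne hab.symm

-- Falls back to `t` itself when `t` has no predecessor of height `o`, so `predAt ht t (ht t) = t`.
open Classical in
noncomputable def predAt (ht : α → Ordinal) (t : α) (o : Ordinal) : α :=
  if h : ∃ s, s < t ∧ ht s = o then h.choose else t

theorem IsHeightFun.predAt_lt (hht : IsHeightFun ht) {t : α} {o : Ordinal} (ho : o < ht t) :
    predAt ht t o < t ∧ ht (predAt ht t o) = o := by
  have hex := hht.2 t o ho
  rw [predAt, dif_pos hex]
  exact hex.choose_spec

theorem IsHeightFun.predAt_le (hht : IsHeightFun ht) {t : α} {o : Ordinal} (ho : o ≤ ht t) :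
    predAt ht t o ≤ t ∧ ht (predAt ht t o) = o := by
  rcases ho.lt_or_eq with ho | rfl
  · exact (hht.predAt_lt ho).imp_left le_of_lt
  · rw [predAt, dif_neg fun ⟨s, hs, hst⟩ => (hht.1 s t hs).ne hst]
    exact ⟨le_rfl, rfl⟩

end Height

section NS

variable {α : Type*} [PartialOrder α] [OrderBot α]

theorem InNS.mono {U V : Set α} (hUV : U ⊆ V) (hV : InNS V) : InNS U := by
  obtain ⟨f, hreg, hfib⟩ := hV
  exact ⟨f, fun t ht => hreg t (hUV ht),
    fun t => (hfib t).mono fun _ hs => And.intro (hUV hs.1) hs.2⟩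

theorem InNS.iUnion {ι : Type*} [Countable ι] {U : ι → Set α} (h : ∀ i, InNS (U i)) :
    InNS (⋃ i, U i) := by
  classical
  choose f hreg hfib using h
  let F (s : α) : α := if hs : ∃ i, s ∈ U i then f hs.choose s else ⊥
  have hF {s : α} (hs : s ∈ ⋃ i, U i) : ∃ i, s ∈ U i ∧ F s = f i s :=
    ⟨_, (mem_iUnion.1 hs).choose_spec, dif_pos (mem_iUnion.1 hs)⟩
  refine ⟨F, fun s hs hs0 => ?_, fun t => ?_⟩
  · obtain ⟨i, hi, hFs⟩ := hF hs
    exact hFs ▸ hreg i s hi hs0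
  · refine (IsSpecialSet.iUnion fun i => hfib i t).mono fun s ⟨hs, hst⟩ => ?_
    obtain ⟨i, hi, hFs⟩ := hF hs
    exact mem_iUnion.2 ⟨i, hi, hFs ▸ hst⟩

theorem InNS.union {U V : Set α} (hU : InNS U) (hV : InNS V) : InNS (U ∪ V) := by
  rw [union_eq_iUnion]
  exact InNS.iUnion fun b => by cases b <;> assumption

variable {ht : α → Ordinal}

theorem IsClubIn.sSup_inter_Iio_lt {C : Set Ordinal} (hC : IsClubIn C) {δ : Ordinal}
    (hδ : δ < omega1) (hδC : δ ∉ C) (hδ0 : δ ≠ 0) : sSup (C ∩ Iio δ) < δ := by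
  refine lt_of_le_of_ne (csSup_le' fun c hc => hc.2.le) fun heq => hδC ?_
  rcases (C ∩ Iio δ).eq_empty_or_nonempty with he | hne
  · exact absurd (heq ▸ he ▸ csSup_empty) hδ0
  · have hlub := isLUB_csSup hne ⟨δ, fun c hc => hc.2.le⟩
    rw [heq] at hlub
    exact hC.2.2 δ hδ hne hlub

-- Regress each node to its predecessor at the last club level below it (level `0` if there is
-- none, as `sSup ∅ = 0`); a fiber then lies below the first club level above its target.
theorem IsClubIn.inNS_ht_notMem {C : Set Ordinal} (hC : IsClubIn C) (hht : IsHeightFun ht)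
    (hΩ : ∀ s, ht s < omega1) : InNS {s | ht s ∉ C} := by
  have hlt {s : α} (hs : ht s ∉ C) (hs0 : s ≠ ⊥) : sSup (C ∩ Iio (ht s)) < ht s :=
    hC.sSup_inter_Iio_lt (hΩ s) hs (mt hht.ht_eq_zero_iff.1 hs0)
  refine ⟨fun s => predAt ht s (sSup (C ∩ Iio (ht s))),
    fun s hs hs0 => (hht.predAt_lt (hlt hs hs0)).1, fun s₀ => ?_⟩
  obtain ⟨γ, hγC, hγ⟩ := hC.2.1 (ht s₀) (hΩ s₀)
  refine (hht.isSpecialSet_ht_lt (hC.1 hγC)).mono fun s ⟨hs, hfs⟩ => ?_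
  show ht s < γ
  rcases eq_or_ne s ⊥ with rfl | hs0
  · exact (hht.ht_eq_zero_iff.2 rfl).trans_lt (zero_le.trans_lt hγ)
  have hsup : ht s₀ = sSup (C ∩ Iio (ht s)) := hfs ▸ (hht.predAt_lt (hlt hs hs0)).2
  refine lt_of_not_ge fun hγs => ?_
  rcases hγs.lt_or_eq with hγs | rfl
  · have hγle : γ ≤ ht s₀ := hsup ▸ le_csSup ⟨ht s, fun c hc => hc.2.le⟩ ⟨hγC, hγs⟩
    exact hγ.not_ge hγle
  · exact hs hγC

theorem IsClubIn.inNS_of_inNS_inter {C : Set Ordinal} (hC : IsClubIn C) (hht : IsHeightFun ht)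
    (hΩ : ∀ s, ht s < omega1) {A : Set α} (h : InNS {s ∈ A | ht s ∈ C}) : InNS A := by
  refine (h.union (hC.inNS_ht_notMem hht hΩ)).mono fun s hs => ?_
  by_cases hsC : ht s ∈ C
  · exact Or.inl ⟨hs, hsC⟩
  · exact Or.inr hsC

-- Regress `s` to its predecessor at the height of `f (g s)`: since `g s` has only one predecessor
-- per level, `g` maps it to `f (g s)`, so the fibers are pulled back from those of `f` (up to `⊥`).
theorem InNS.preimage {β : Type*} [PartialOrder β] [OrderBot β] {htβ : β → Ordinal}
    (hht : IsHeightFun ht) (hchainβ : PredsChain β) (hhtβ : IsHeightFun htβ) {g : α → β}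
    (hg : StrictMono g) (hgl : ∀ s, htβ (g s) = ht s) {B : Set β} (hB : InNS B) :
    InNS (g ⁻¹' B) := by
  obtain ⟨f, hreg, hfib⟩ := hB
  have hlt {s : α} (hs : g s ∈ B) (hs0 : s ≠ ⊥) : f (g s) < g s := by
    refine hreg _ hs fun h => hs0 (hht.ht_eq_zero_iff.1 ?_)
    rw [← hgl, h, hhtβ.ht_eq_zero_iff]
  have hpred {s : α} (hs : g s ∈ B) (hs0 : s ≠ ⊥) :=
    hht.predAt_lt (o := htβ (f (g s))) (hgl s ▸ hhtβ.1 _ _ (hlt hs hs0))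
  refine ⟨fun s => predAt ht s (htβ (f (g s))), fun s hs hs0 => (hpred hs hs0).1,
    fun s₀ => ?_⟩
  refine (((hfib (g s₀)).preimage hg).insert ⊥).mono fun s ⟨hs, hfs⟩ => ?_
  rcases eq_or_ne s ⊥ with rfl | hs0
  · exact mem_insert _ _
  refine mem_insert_of_mem _ ⟨hs, ?_⟩
  obtain ⟨hlt₀, hht₀⟩ := hpred hs hs0
  dsimp only at hfs
  rw [hfs] at hlt₀ hht₀
  refine hchainβ.eq_of_ht_eq hhtβ (hlt hs hs0) (hg hlt₀) ?_
  rw [hgl, hht₀]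

end NS

theorem ordPair_mem_iUnion_image_iff {Z : ℕ → Set Ordinal} {ξ : Ordinal} {m : ℕ} :
    ordPair ξ m ∈ ⋃ k, (fun ζ => ordPair ζ k) '' Z k ↔ ξ ∈ Z m := by
  refine ⟨fun h => ?_, fun h => mem_iUnion.2 ⟨m, mem_image_of_mem _ h⟩⟩
  obtain ⟨k, ζ, hζ, heq⟩ := mem_iUnion.1 h
  obtain ⟨rfl, rfl⟩ := ordPair_inj.1 heq
  exact hζ

theorem exists_nat_injOn_levels {β : Type*} (ht : β → Ordinal) {R : Set β}
    (hR : ∀ δ, (R ∩ {v | ht v = δ}).Countable) :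
    ∃ c : β → ℕ, ∀ u ∈ R, ∀ v ∈ R, ht u = ht v → c u = c v → u = v := by
  choose ι hι using fun δ => countable_iff_exists_injOn.1 (hR δ)
  refine ⟨fun v => ι (ht v) v, fun u hu v hv huv hc => ?_⟩
  dsimp only at hc
  rw [huv] at hc
  exact hι (ht v) ⟨hu, huv⟩ ⟨hv, rfl⟩ hc

section Guessing

variable {α : Type*} [PartialOrder α] {ht : α → Ordinal}

def GuessesOrdinals [OrderBot α] (ht : α → Ordinal) (D : α → Set Ordinal) : Prop :=
  ∀ Z : Set Ordinal, ¬ InNS {s | Z ∩ Iio (ht s) = D s}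

theorem guessesOrdinals_image_of_diamond [OrderBot α] (hht : IsHeightFun ht) {D : α → Set α}
    (hD : ∀ X : Set α, ¬ InNS {t | X ∩ Iio t = D t}) :
    GuessesOrdinals ht fun s => ht '' D s := fun Z hZ =>
  hD (ht ⁻¹' Z) (hZ.mono fun s (hs : ht ⁻¹' Z ∩ Iio s = D s) => by
    show Z ∩ Iio (ht s) = ht '' D s
    rw [← hs, image_preimage_inter, hht.image_Iio])

-- Kunen's argument: candidate `m` decodes, through column `m` of `ordPair`, the guess at the
-- `m`-th node of each level. If every candidate failed on some `Z m`, the node guesses would fail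
-- on the union of the coded `Z m` at every node whose level is closed under `ordPair`.
theorem GuessesOrdinals.exists_levelwise [OrderBot α] (hht : IsHeightFun ht)
    (hΩ : ∀ s, ht s < omega1) (hlev : CountableLevels ht) {D : α → Set Ordinal}
    (hD : GuessesOrdinals ht D) :
    ∃ E : Ordinal → Set Ordinal, GuessesOrdinals ht fun s => E (ht s) := by
  choose e he using fun δ => countable_iff_exists_subset_range.1 (hlev δ)
  let E (m : ℕ) (δ : Ordinal) : Set Ordinal := {ξ | ordPair ξ m ∈ D (e δ m)}
  by_contra! hfail
  simp only [GuessesOrdinals, not_forall, not_not] at hfail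
  choose Z hZ using fun m => hfail (E m)
  refine hD (⋃ m, (fun ξ => ordPair ξ m) '' Z m)
    (isClubIn_pairClosed.inNS_of_inNS_inter hht hΩ ((InNS.iUnion hZ).mono ?_))
  rintro s ⟨hs : _ ∩ _ = D s, hsC⟩
  obtain ⟨m, hm⟩ := he (ht s) rfl
  refine mem_iUnion.2 ⟨m, ?_⟩
  ext ξ
  simp only [E, hm, ← hs, mem_inter_iff, mem_Iio, ordPair_mem_iUnion_image_iff,
    ordPair_lt_iff_of_mem_pairClosed hsC, mem_ofPred_eq]

end Guessing

section Embedding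

variable {α β : Type*} [PartialOrder α] [PartialOrder β] {htα : α → Ordinal.{u}}
  {htβ : β → Ordinal.{u}} {g : α → β}

theorem IsHeightFun.le_ht_apply (hhtα : IsHeightFun htα) (hhtβ : IsHeightFun htβ)
    (hg : StrictMono g) (s : α) : htα s ≤ htβ (g s) := by
  induction hs : htα s using WellFoundedLT.induction generalizing s with
  | ind o IH =>
    by_contra! hlt
    obtain ⟨s', hs', hh⟩ := hhtα.2 s _ (hs ▸ hlt)
    exact (IH _ hlt s' hh).not_gt (hhtβ.1 _ _ (hg hs'))

theorem PredsChain.exists_strictMono_ht_eq (hchainβ : PredsChain β) (hhtα : IsHeightFun htα)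
    (hhtβ : IsHeightFun htβ) (hg : StrictMono g) :
    ∃ g' : α → β, StrictMono g' ∧ ∀ s, htβ (g' s) = htα s := by
  have hspec (s : α) := hhtβ.predAt_le (hhtα.le_ht_apply hhtβ hg s)
  refine ⟨fun s => predAt htβ (g s) (htα s), fun s₁ s₂ h => ?_, fun s => (hspec s).2⟩
  refine hchainβ.lt_of_ht_lt hhtβ ((hspec s₁).1.trans_lt (hg h)) (hspec s₂).1 ?_
  rw [(hspec s₁).2, (hspec s₂).2]
  exact hhtα.1 _ _ h

theorem PredsChain.mem_range_of_lt (hchainβ : PredsChain β) (hhtα : IsHeightFun htα)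
    (hhtβ : IsHeightFun htβ) (hg : StrictMono g) (hgl : ∀ s, htβ (g s) = htα s) {s : α} {v : β}
    (hv : v < g s) : v ∈ range g := by
  obtain ⟨hlt, hp⟩ := hhtα.predAt_lt (hgl s ▸ hhtβ.1 _ _ hv)
  exact ⟨_, hchainβ.eq_of_ht_eq hhtβ (hg hlt) hv (by rw [hgl, hp])⟩

-- `code` identifies a node of `range g` by its level and its index in that countable level. At
-- levels closed under `ordPair`, guessing the codes of `X ∩ range g` guesses `X` below image
-- nodes, because `range g` is downward closed.
theorem diamondTree_of_guessesOrdinals_levelwise [OrderBot α] [OrderBot β] (hhtα : IsHeightFun htα)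
    (hΩ : ∀ s, htα s < omega1) (hlev : CountableLevels htα) (hchainβ : PredsChain β)
    (hhtβ : IsHeightFun htβ) (hg : StrictMono g) (hgl : ∀ s, htβ (g s) = htα s)
    {E : Ordinal → Set Ordinal} (hE : GuessesOrdinals htα fun s => E (htα s)) :
    DiamondTree β := by
  obtain ⟨c, hc⟩ := exists_nat_injOn_levels htβ (R := range g) fun δ =>
    ((hlev δ).image g).mono (by rintro _ ⟨⟨s, rfl⟩, hs⟩; exact ⟨s, (hgl s).symm.trans hs, rfl⟩)
  let code (v : β) : Ordinal := ordPair (htβ v) (c v)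
  have hcode : InjOn code (range g) := fun u hu v hv h =>
    hc u hu v hv (ordPair_inj.1 h).1 (ordPair_inj.1 h).2
  refine ⟨fun t => {v | v < t ∧ v ∈ range g ∧ code v ∈ E (htβ t)}, fun t v hv => hv.1,
    fun X hX => hE (code '' (X ∩ range g)) (isClubIn_pairClosed.inNS_of_inNS_inter hhtα hΩ
      ((hX.preimage hhtα hchainβ hhtβ hg hgl).mono ?_))⟩
  rintro s ⟨hs : _ ∩ _ = E (htα s), hsC⟩
  show X ∩ Iio (g s) = {v | v < g s ∧ v ∈ range g ∧ code v ∈ E (htβ (g s))}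
  rw [hgl, ← hs]
  ext v
  constructor
  · rintro ⟨hvX, hv⟩
    have hvg := hchainβ.mem_range_of_lt hhtα hhtβ hg hgl hv
    exact ⟨hv, hvg, mem_image_of_mem _ ⟨hvX, hvg⟩,
      (ordPair_lt_iff_of_mem_pairClosed hsC).2 (hgl s ▸ hhtβ.1 _ _ hv)⟩
  · rintro ⟨hv, hvg, ⟨w, ⟨hwX, hwg⟩, hwv⟩, -⟩
    exact ⟨hcode hwg hvg hwv ▸ hwX, hv⟩

theorem diamondTree_of_strictMono [OrderBot α] [OrderBot β] (hhtα : IsHeightFun htα)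
    (hΩ : ∀ s, htα s < omega1) (hlev : CountableLevels htα) (hchainβ : PredsChain β)
    (hhtβ : IsHeightFun htβ) (hg : StrictMono g) (hD : DiamondTree α) : DiamondTree β := by
  obtain ⟨g', hg', hgl⟩ := hchainβ.exists_strictMono_ht_eq hhtα hhtβ hg
  obtain ⟨D, -, hD⟩ := hD
  obtain ⟨E, hE⟩ := (guessesOrdinals_image_of_diamond hhtα hD).exists_levelwise hhtα hΩ hlev
  exact diamondTree_of_guessesOrdinals_levelwise hhtα hΩ hlev hchainβ hhtβ hg' hgl hE

end Embedding

section Lift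

variable {α : Type*} [PartialOrder α] {ht : α → Ordinal.{u}}

theorem IsHeightFun.lift (hht : IsHeightFun ht) :
    IsHeightFun fun t => Ordinal.lift.{v} (ht t) := by
  refine ⟨fun s t hst => lift_lt.2 (hht.1 s t hst), fun t o ho => ?_⟩
  obtain ⟨o', ho', rfl⟩ := lt_lift_iff.1 ho
  obtain ⟨s, hs, rfl⟩ := hht.2 t o' ho'
  exact ⟨s, hs, rfl⟩

theorem CountableLevels.lift {γ : Type*} {ht : γ → Ordinal.{u}} (hlev : CountableLevels ht) :
    CountableLevels fun t => Ordinal.lift.{v} (ht t) := by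
  intro o
  by_cases ho : ∃ t, Ordinal.lift.{v} (ht t) = o
  · obtain ⟨t, rfl⟩ := ho
    simpa only [Ordinal.lift_inj] using hlev (ht t)
  · simp only [not_exists] at ho
    simp [ho]

theorem diamondTree_of_strictMono_lift {β : Type*} [OrderBot α] [PartialOrder β] [OrderBot β]
    {htβ : β → Ordinal.{v}} (hht : IsHeightFun ht) (hΩ : ∀ s, ht s < omega1)
    (hlev : CountableLevels ht) (hchainβ : PredsChain β) (hhtβ : IsHeightFun htβ) {g : α → β}
    (hg : StrictMono g) (hD : DiamondTree α) : DiamondTree β :=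
  diamondTree_of_strictMono hht.lift.{u, v} (fun s => lift_lt_omega_one.2 (hΩ s))
    hlev.lift.{u, v} hchainβ hhtβ.lift.{v, u} hg hD

end Lift

theorem stmt7_general {S T : Type*} [PartialOrder S] [OrderBot S] [PartialOrder T] [OrderBot T]
    (htS : S → Ordinal)
    (hhtS : IsHeightFun htS) (hΩS : HeightOmega1 htS) (hlevS : CountableLevels htS)
    (hnsS : ¬ IsSpecialSet (Set.univ : Set S))
    (hchainT : PredsChain T) (htT : T → Ordinal)
    (hhtT : IsHeightFun htT)
    (hle : ∃ g : S → T, StrictMono g) :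
    ¬ IsSpecialSet (Set.univ : Set T) ∧ (DiamondTree S → DiamondTree T) := by
  obtain ⟨g, hg⟩ := hle
  refine ⟨fun hT => hnsS (by simpa using hT.preimage hg), fun hD => ?_⟩
  exact diamondTree_of_strictMono_lift hhtS hΩS.1 hlevS hchainT hhtT hg hD

/-- If `S` and `T` are trees of height `ω₁` with `S ≤ T`
(there is a strictly increasing map from `S` to `T`) and `S` is a nonspecial `ω₁`-tree,
then `T` is nonspecial and `◊_S` implies `◊_T`. -/
theorem stmt7 {S T : Type*} [PartialOrder S] [OrderBot S] [PartialOrder T] [OrderBot T]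
    (hchainS : PredsChain S) (htS : S → Ordinal)
    (hhtS : IsHeightFun htS) (hΩS : HeightOmega1 htS) (hlevS : CountableLevels htS)
    (hnsS : ¬ IsSpecialSet (Set.univ : Set S))
    (hchainT : PredsChain T) (htT : T → Ordinal)
    (hhtT : IsHeightFun htT) (hΩT : HeightOmega1 htT)
    (hle : ∃ g : S → T, StrictMono g) :
    ¬ IsSpecialSet (Set.univ : Set T) ∧ (DiamondTree S → DiamondTree T) :=
  stmt7_general htS hhtS hΩS hlevS hnsS hchainT htT hhtT hle
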